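/- arXiv:2012.11421 — 16 statements merged into one kernel-verified Lean document; each statement's English description precedes it below -/
import Mathlib

section
/- There do not exist real numbers α, β, λ, λ₁, λ₂, λ₃ with α ≠ 0 satisfying the system: 2λ₂α - 2α² - β² + 2λ = 0, λ₁α = 0, -βλ₂ + αβ = 0, -2α² - β² + 2λ = 0, (β/2)λ₁ + α² = 0, and λ = 0. -/
theorem stmt0 : ¬ ∃ α β l l1 l2 l3 : ℝ, α ≠ 0 ∧
    2*l2*α - 2*α^2 - β^2 + 2*l = 0 ∧ l1*α = 0 ∧ -β*l2 + α*β = 0 ∧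
    -2*α^2 - β^2 + 2*l = 0 ∧ (β/2)*l1 + α^2 = 0 ∧ l = 0 := by
  rintro ⟨α, β, l, l1, l2, l3, hα, h1, h2, h3, h4, h5, h6⟩
  rcases mul_eq_zero.mp h2 with h | h
  · rw [h] at h5; exact hα (pow_eq_zero_iff (n := 2) two_ne_zero |>.mp (by linarith))
  · exact hα h
end

section
/- There do not exist real numbers α, β, λ, λ₁, λ₂, λ₃ with α ≠ 0 satisfying: λ₂α - α² - β² + λ = 0, -λ₁α + 2αβ = 0, λ₁α - βλ₂ - αβ = 0, -α² - β² + λ = 0, βλ₁ - αλ₂ - αλ₃ + α² = 0, and λ = 0. -/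
theorem stmt1 : ¬ ∃ α β l l1 l2 l3 : ℝ, α ≠ 0 ∧
    l2*α - α^2 - β^2 + l = 0 ∧ -l1*α + 2*α*β = 0 ∧ l1*α - β*l2 - α*β = 0 ∧
    -α^2 - β^2 + l = 0 ∧ β*l1 - α*l2 - α*l3 + α^2 = 0 ∧ l = 0 := by
  rintro ⟨α, β, l, l1, l2, l3, hα, h1, h2, h3, h4, h5, h6⟩
  subst h6
  have : α = 0 := by nlinarith [sq_nonneg α, sq_nonneg β]
  exact hα this
end

section
/- There do not exist real numbers α, β, γ, λ, λ₁, λ₂ with γ ≠ 0 satisfying: -(γ² + αβ/2) + λ = 0, λ₂γ = 0, αλ₂ = 0, -γλ₁ - (γ² + αβ/2) + λ = 0, (α/2)λ₁ + 2(βγ/2 - αγ/4) = 0, and λ = 0. -/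
theorem stmt2 : ¬ ∃ α β γ l l1 l2 : ℝ, γ ≠ 0 ∧
    -(γ^2 + α*β/2) + l = 0 ∧ l2*γ = 0 ∧ α*l2 = 0 ∧
    -γ*l1 - (γ^2 + α*β/2) + l = 0 ∧ (α/2)*l1 + 2*(β*γ/2 - α*γ/4) = 0 ∧ l = 0 := by
  rintro ⟨α, β, γ, l, l1, l2, hγ, h1, h2, h3, h4, h5, h6⟩
  subst h6
  have hl1 : l1 = 0 := by
    have : -γ*l1 = 0 := by linarith
    rcases mul_eq_zero.mp this with h | h
    · exact absurd (neg_eq_zero.mp h) hγ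
    · exact h
  subst hl1
  have hβ : β = α/2 := by
    have h5' : γ * (β - α/2) = 0 := by ring_nf; ring_nf at h5; linarith
    rcases mul_eq_zero.mp h5' with h | h
    · exact absurd h hγ
    · linarith
  subst hβ
  have : γ^2 + α^2/4 = 0 := by nlinarith
  nlinarith [sq_nonneg γ, sq_nonneg α, sq_pos_of_ne_zero hγ]
end

section
/- There do not exist real numbers α, β, γ, λ, λ₁, λ₂, λ₃ with γ ≠ 0 satisfying: -β² - γ² + λ = 0, λ₂γ = 0, -αλ₂ + γλ₃ = 0, -γλ₁ - (γ² + αβ) + λ = 0, λ₁β - αγ = 0, and λ = 0. -/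
theorem stmt3 : ¬ ∃ α β γ l l1 l2 l3 : ℝ, γ ≠ 0 ∧
    -β^2 - γ^2 + l = 0 ∧ l2*γ = 0 ∧ -α*l2 + γ*l3 = 0 ∧
    -γ*l1 - (γ^2 + α*β) + l = 0 ∧ l1*β - α*γ = 0 ∧ l = 0 := by
  rintro ⟨α, β, γ, l, l1, l2, l3, hγ, h1, -, -, -, -, hl⟩
  subst hl
  have : γ^2 = 0 := by nlinarith [sq_nonneg β, sq_nonneg γ]
  exact hγ (pow_eq_zero_iff (n := 2) two_ne_zero |>.mp this)
end

section
/- Let α, β, γ, λ, λ₁, λ₂ be real, with a₁ = (α - β - γ)/2, a₂ = (α - β + γ)/2, a₃ = (α + β - γ)/2. Then the system γ(a₁ - a₃) + λ = 0, (a₂ + a₃)λ₂ = 0, -γ(a₂ + a₃) + λ = 0, λ₁(a₃ - a₁) = 0, λ = 0 holds if and only if either (i) λ = 0, γ ≠ 0, α = β = 0, or (ii) λ = γ = 0, αλ₂ = 0, λ₁β = 0. -/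
theorem stmt5 (α β γ l l1 l2 : ℝ) (a1 a2 a3 : ℝ)
    (ha1 : a1 = (α - β - γ)/2) (ha2 : a2 = (α - β + γ)/2) (ha3 : a3 = (α + β - γ)/2) :
    (γ*(a1 - a3) + l = 0 ∧ (a2 + a3)*l2 = 0 ∧ -γ*(a2 + a3) + l = 0 ∧
     l1*(a3 - a1) = 0 ∧ l = 0) ↔
    ((l = 0 ∧ γ ≠ 0 ∧ α = 0 ∧ β = 0) ∨
     (l = 0 ∧ γ = 0 ∧ α*l2 = 0 ∧ l1*β = 0)) := by
  subst ha1 ha2 ha3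
  constructor
  · rintro ⟨h1, h2, h3, h4, h5⟩
    rcases eq_or_ne γ 0 with hg | hg
    · right
      refine ⟨h5, hg, by linarith [h2], by linarith [h4]⟩
    · left
      have hb : β = 0 := by
        have := h1; field_simp at this
        rcases mul_eq_zero.mp (by linarith : γ * β = 0) with h | h
        · exact absurd h hg
        · exact h
      have ha : α = 0 := by
        have := h3; field_simp at this
        rcases mul_eq_zero.mp (by nlinarith : γ * α = 0) with h | h
        · exact absurd h hg
        · exact h
      exact ⟨h5, hg, ha, hb⟩
  · rintro (⟨h5, hg, ha, hb⟩ | ⟨h5, hg, ha, hb⟩)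
    · subst ha hb h5; refine ⟨by ring, by ring, by ring, by ring, rfl⟩
    · subst hg h5
      refine ⟨by ring, by nlinarith [ha], by ring, by nlinarith [hb], rfl⟩
end

section
/- Let α, β, λ, λ₁, λ₂ be real, η = 1 or η = -1, and b₃ = α/2 + η. Then the system (2η - β)b₃ - 1 + λ = 0, λ₂ = 0, λ₁ + (2η - β)b₃ - 1 + λ = 0, λ₁b₃ + b₃ - β = 0, λ = 0 holds if and only if λ = λ₁ = λ₂ = 0, α = 0, and β = η. -/
theorem stmt6 (α β l l1 l2 η : ℝ) (hη : η = 1 ∨ η = -1) (b3 : ℝ) (hb3 : b3 = α/2 + η) :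
    ((2*η - β)*b3 - 1 + l = 0 ∧ l2 = 0 ∧ l1 + (2*η - β)*b3 - 1 + l = 0 ∧
     l1*b3 + b3 - β = 0 ∧ l = 0) ↔
    (l = 0 ∧ l1 = 0 ∧ l2 = 0 ∧ α = 0 ∧ β = η) := by
  subst hb3
  constructor
  · rintro ⟨h1, h2, h3, h4, h5⟩
    have hl1 : l1 = 0 := by linarith
    subst hl1 h5 h2
    have hβ : β = α/2 + η := by linarith
    subst hβ
    have hα : α = 0 := by rcases hη with h | h <;> subst h <;> nlinarith [sq_nonneg α]
    refine ⟨rfl, rfl, rfl, hα, by rw [hα]; ring⟩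
  · rintro ⟨h1, h2, h3, h4, h5⟩
    subst h1 h2 h3 h4
    rcases hη with h | h <;> subst h <;> norm_num at h5 ⊢ <;> simp [h5] <;> ring
end

section
/- Let α, β, λ, λ₁, λ₂, λ₃ be real, η ∈ {1,-1}, b₁ = α/2 + η - β, b₂ = α/2 - η, b₃ = α/2 + η. Then the system -[1 + (β-2η)(b₃-b₁)] + λ = 0, λ₂ = 0, -(b₂+b₃)λ₂ - λ₃ = 0, λ₁ - [1 + (β-2η)(b₂+b₃)] + λ = 0, λ₁(b₃-b₁) + (α + b₃ - b₁ - β) = 0, λ = 0 has no solution. -/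
theorem stmt7 : ¬ ∃ α β l l1 l2 l3 η : ℝ, (η = 1 ∨ η = -1) ∧
    (let b1 := α/2 + η - β; let b2 := α/2 - η; let b3 := α/2 + η;
     -(1 + (β - 2*η)*(b3 - b1)) + l = 0 ∧ l2 = 0 ∧ -(b2 + b3)*l2 - l3 = 0 ∧
     l1 - (1 + (β - 2*η)*(b2 + b3)) + l = 0 ∧
     l1*(b3 - b1) + (α + b3 - b1 - β) = 0 ∧ l = 0) := by
  rintro ⟨α, β, l, l1, l2, l3, η, hη, h1, h2, h3, h4, h5, h6⟩
  rcases hη with h | h <;> subst h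
  · have hb : β = 1 := by nlinarith [sq_nonneg (β - 1)]
    subst hb; nlinarith
  · have hb : β = -1 := by nlinarith [sq_nonneg (β + 1)]
    subst hb; nlinarith
end

section
/- Let α, β, γ, δ, λ, λ₁, λ₂ be real with α + δ ≠ 0 and αγ + βδ = 0. Then the system λ = 0, αλ₁ + γλ₂ = 0, βλ₁ + δλ₂ = 0 holds if and only if one of: (i) λ = λ₁ = λ₂ = 0; (ii) λ = 0, λ₁ ≠ 0, λ₂ = 0, α = β = 0, δ ≠ 0; (iii) λ = 0, λ₁ = 0, λ₂ ≠ 0, δ = γ = 0, α ≠ 0. -/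
theorem stmt9 (α β γ δ l l1 l2 : ℝ) (h1 : α + δ ≠ 0) (h2 : α*γ + β*δ = 0) :
    (l = 0 ∧ α*l1 + γ*l2 = 0 ∧ β*l1 + δ*l2 = 0) ↔
    ((l = 0 ∧ l1 = 0 ∧ l2 = 0) ∨
     (l = 0 ∧ l1 ≠ 0 ∧ l2 = 0 ∧ α = 0 ∧ β = 0 ∧ δ ≠ 0) ∨
     (l = 0 ∧ l1 = 0 ∧ l2 ≠ 0 ∧ δ = 0 ∧ γ = 0 ∧ α ≠ 0)) := by
  constructor
  · rintro ⟨hl, e1, e2⟩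
    by_cases h2' : l2 = 0
    · subst h2'
      by_cases h1' : l1 = 0
      · exact Or.inl ⟨hl, h1', rfl⟩
      · have hα : α = 0 := by
          have := e1; field_simp at this
          rcases mul_eq_zero.mp (by linarith : α * l1 = 0) with h | h
          · exact h
          · exact absurd h h1'
        have hβ : β = 0 := by
          rcases mul_eq_zero.mp (by linarith : β * l1 = 0) with h | h
          · exact h
          · exact absurd h h1'
        have hδ : δ ≠ 0 := by
          intro hd; apply h1; rw [hα, hd]; ring
        exact Or.inr (Or.inl ⟨hl, h1', rfl, hα, hβ, hδ⟩)
    · -- l2 ≠ 0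
      have key : γ = 0 ∧ δ = 0 := by
        constructor
        · by_contra hγ
          have h0 : (γ^2 + δ^2) * l2 = 0 := by linear_combination γ * e1 + δ * e2 - l1 * h2
          rcases mul_eq_zero.mp h0 with h | h
          · have : γ = 0 ∧ δ = 0 := by
              constructor <;> nlinarith [sq_nonneg γ, sq_nonneg δ]
            exact hγ this.1
          · exact h2' h
        · by_contra hδ
          have h0 : (γ^2 + δ^2) * l2 = 0 := by linear_combination γ * e1 + δ * e2 - l1 * h2
          rcases mul_eq_zero.mp h0 with h | h
          · have : δ = 0 := by nlinarith [sq_nonneg γ, sq_nonneg δ]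
            exact hδ this
          · exact h2' h
      obtain ⟨hγ, hδ⟩ := key
      have hα : α ≠ 0 := by intro ha; apply h1; rw [ha, hδ]; ring
      have hl1 : l1 = 0 := by
        rw [hγ] at e1
        rcases mul_eq_zero.mp (by linarith : α * l1 = 0) with h | h
        · exact absurd h hα
        · exact h
      exact Or.inr (Or.inr ⟨hl, hl1, h2', hδ, hγ, hα⟩)
  · rintro (⟨hl, h1', h2'⟩ | ⟨hl, _, h2', hα, hβ, _⟩ | ⟨hl, h1', _, hδ, hγ, _⟩) <;>
      subst hl <;> refine ⟨rfl, ?_, ?_⟩ <;> simp_all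
end

section
/- Let α, β, γ, δ, λ, λ₁, λ₂ be real with α + δ ≠ 0 and αγ - βδ = 0. Then the system (1/2)β(β-γ) - α² + λ = 0, αλ₂ = 0, (γ-β)λ₂ = 0, -αλ₁ + (1/2)β(β-γ) - α² + λ = 0, ((β-γ)/2)λ₁ - γα + (1/2)δ(β-γ) = 0, λ = 0 holds if and only if one of: (i) λ = λ₁ = λ₂ = γ = δ = 0, α ≠ 0, α² = β²/2; (ii) λ = λ₁ = λ₂ = α = β = γ = 0, δ ≠ 0; (iii) λ = λ₂ = 0, λ₁ ≠ 0, α = β = γ = 0, δ ≠ 0; (iv) λ = λ₂ = 0, λ₁ ≠ 0, α = β = 0, δ ≠ 0, γ ≠ 0, λ₁ = -δ; (v) λ = α = β = γ = 0, λ₂ ≠ 0, δ ≠ 0. -/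
theorem stmt10 (α β γ δ l l1 l2 : ℝ) (h1 : α + δ ≠ 0) (h2 : α*γ - β*δ = 0) :
    ((1/2)*β*(β - γ) - α^2 + l = 0 ∧ α*l2 = 0 ∧ (γ - β)*l2 = 0 ∧
     -α*l1 + (1/2)*β*(β - γ) - α^2 + l = 0 ∧
     ((β - γ)/2)*l1 - γ*α + (1/2)*δ*(β - γ) = 0 ∧ l = 0) ↔
    ((l = 0 ∧ l1 = 0 ∧ l2 = 0 ∧ γ = 0 ∧ δ = 0 ∧ α ≠ 0 ∧ α^2 = β^2/2) ∨
     (l = 0 ∧ l1 = 0 ∧ l2 = 0 ∧ α = 0 ∧ β = 0 ∧ γ = 0 ∧ δ ≠ 0) ∨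
     (l = 0 ∧ l2 = 0 ∧ l1 ≠ 0 ∧ α = 0 ∧ β = 0 ∧ γ = 0 ∧ δ ≠ 0) ∨
     (l = 0 ∧ l2 = 0 ∧ l1 ≠ 0 ∧ α = 0 ∧ β = 0 ∧ δ ≠ 0 ∧ γ ≠ 0 ∧ l1 = -δ) ∨
     (l = 0 ∧ α = 0 ∧ β = 0 ∧ γ = 0 ∧ l2 ≠ 0 ∧ δ ≠ 0)) := by
  constructor
  · rintro ⟨e1, e2, e3, e4, e5, rfl⟩
    by_cases hα : α = 0
    · subst hα
      have hδ : δ ≠ 0 := by simpa using h1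
      have hβ : β = 0 := by
        have : β * δ = 0 := by linarith
        rcases mul_eq_zero.1 this with h | h
        · exact h
        · exact absurd h hδ
      subst hβ
      by_cases hγ : γ = 0
      · subst hγ
        by_cases hl2 : l2 = 0
        · by_cases hl1 : l1 = 0
          · exact Or.inr (Or.inl ⟨rfl, hl1, hl2, rfl, rfl, rfl, hδ⟩)
          · exact Or.inr (Or.inr (Or.inl ⟨rfl, hl2, hl1, rfl, rfl, rfl, hδ⟩))
        · exact Or.inr (Or.inr (Or.inr (Or.inr ⟨rfl, rfl, rfl, rfl, hl2, hδ⟩)))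
      · have hl2 : l2 = 0 := by
          rcases mul_eq_zero.1 (by linarith : γ * l2 = 0) with h | h
          · exact absurd h hγ
          · exact h
        have hl1 : l1 = -δ := by
          have h5 : γ * (l1 + δ) = 0 := by ring_nf; ring_nf at e5; linarith
          rcases mul_eq_zero.1 h5 with h | h
          · exact absurd h hγ
          · linarith
        have hl1ne : l1 ≠ 0 := by rw [hl1]; simpa using hδ
        exact Or.inr (Or.inr (Or.inr (Or.inl ⟨rfl, hl2, hl1ne, rfl, rfl, hδ, hγ, hl1⟩)))
    · have hl1 : l1 = 0 := by
        have : α * l1 = 0 := by linarith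
        rcases mul_eq_zero.1 this with h | h
        · exact absurd h hα
        · exact h
      have hl2 : l2 = 0 := by
        rcases mul_eq_zero.1 e2 with h | h
        · exact absurd h hα
        · exact h
      subst hl1
      -- e5 becomes: -γα + (1/2)δ(β-γ) = 0, combined with h2: αγ = βδ
      -- gives δ(β+γ) = 0
      have hsum : δ * (β + γ) = 0 := by nlinarith [e5, h2]
      have hδ : δ = 0 := by
        by_contra hδ
        have hγβ : γ = -β := by
          rcases mul_eq_zero.1 hsum with h | h
          · exact absurd h hδ
          · linarith
        have hβ : β = 0 := by
          have : β * (α + δ) = 0 := by rw [hγβ] at h2; linear_combination -h2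
          rcases mul_eq_zero.1 this with h | h
          · exact h
          · exact absurd h h1
        have hγ : γ = 0 := by rw [hγβ, hβ]; ring
        have : α = 0 := by nlinarith [e1, hβ, hγ]
        exact hα this
      have hγ : γ = 0 := by
        have : α * γ = 0 := by rw [hδ] at h2; linarith
        rcases mul_eq_zero.1 this with h | h
        · exact absurd h hα
        · exact h
      exact Or.inl ⟨rfl, rfl, hl2, hγ, hδ, hα, by rw [hγ] at e1; linear_combination -e1⟩
  · rintro (⟨rfl, rfl, rfl, rfl, rfl, hα, hαβ⟩ | ⟨rfl, rfl, rfl, rfl, rfl, rfl, hδ⟩ |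
      ⟨rfl, rfl, hl1, rfl, rfl, rfl, hδ⟩ | ⟨rfl, rfl, hl1, rfl, rfl, hδ, hγ, rfl⟩ |
      ⟨rfl, rfl, rfl, rfl, hl2, hδ⟩) <;>
    refine ⟨by nlinarith, by ring, by ring, by nlinarith, by ring, rfl⟩
end

section
/- Let α, β, γ, δ, λ, λ₁, λ₂, λ₃ be real with α + δ ≠ 0 and αγ - βδ = 0. Then the system -(α² + βγ) + λ = 0, λ₂α = 0, δλ₃ = 0, -αλ₁ - α² + λ = 0, γλ₁ = 0, λ = 0 holds if and only if either (i) λ = α = β = λ₁ = λ₃ = 0, δ ≠ 0, or (ii) λ = α = β = γ = λ₃ = 0, δ ≠ 0, λ₁ ≠ 0. -/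
theorem stmt11 (α β γ δ l l1 l2 l3 : ℝ) (h1 : α + δ ≠ 0) (h2 : α*γ - β*δ = 0) :
    (-(α^2 + β*γ) + l = 0 ∧ l2*α = 0 ∧ δ*l3 = 0 ∧ -α*l1 - α^2 + l = 0 ∧
     γ*l1 = 0 ∧ l = 0) ↔
    ((l = 0 ∧ α = 0 ∧ β = 0 ∧ l1 = 0 ∧ l3 = 0 ∧ δ ≠ 0) ∨
     (l = 0 ∧ α = 0 ∧ β = 0 ∧ γ = 0 ∧ l3 = 0 ∧ δ ≠ 0 ∧ l1 ≠ 0)) := by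
  constructor
  · rintro ⟨e1, e2, e3, e4, e5, e6⟩
    subst e6
    have hα : α = 0 := by
      by_contra hα
      have hl1 : l1 = -α := by
        have h0 : α * (l1 + α) = 0 := by linear_combination -e4
        rcases mul_eq_zero.1 h0 with h | h
        · exact absurd h hα
        · linarith
      have hγ : γ = 0 := by
        rw [hl1] at e5
        rcases mul_eq_zero.1 e5 with h | h
        · exact h
        · exact absurd (neg_eq_zero.1 h) hα
      rw [hγ] at e1
      exact hα (pow_eq_zero_iff two_ne_zero |>.1 (by linarith [e1]))
    subst hα
    have hδ : δ ≠ 0 := by simpa using h1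
    have hβ : β = 0 := by
      have : β * δ = 0 := by linarith [h2]
      rcases mul_eq_zero.1 this with h | h
      · exact h
      · exact absurd h hδ
    have hl3 : l3 = 0 := by
      rcases mul_eq_zero.1 e3 with h | h
      · exact absurd h hδ
      · exact h
    rcases mul_eq_zero.1 e5 with hγ | hl1
    · by_cases hl1 : l1 = 0
      · exact Or.inl ⟨rfl, rfl, hβ, hl1, hl3, hδ⟩
      · exact Or.inr ⟨rfl, rfl, hβ, hγ, hl3, hδ, hl1⟩
    · exact Or.inl ⟨rfl, rfl, hβ, hl1, hl3, hδ⟩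
  · rintro (⟨hl, ha, hb, h1', h3, hd⟩ | ⟨hl, ha, hb, hg, h3, hd, h1'⟩) <;>
      subst_vars <;> refine ⟨by ring_nf, by ring, by ring, by ring_nf, ?_, rfl⟩
    · ring
    · ring
end

section
/- Let α, β, γ, δ, λ, λ₁, λ₂ be real with α + δ ≠ 0 and αγ = 0. Then the system -αλ₂ - (α² + βγ/2) + λ = 0, αλ₁ - βλ₂ = 0, (β - γ/2)λ₂ - (γα + δγ/2) = 0, βλ₁ - (α² + βγ/2) + λ = 0, (γ/2 - β)λ₁ + α² + βγ/2 = 0, λ = 0 holds if and only if one of: (i) λ = α = β = γ = 0, δ ≠ 0; (ii) λ = α = β = 0, γ ≠ 0, λ₁ = 0, λ₂ = -δ, δ ≠ 0; (iii) λ = α = γ = λ₁ = λ₂ = 0, β ≠ 0. -/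
theorem stmt12 (α β γ δ l l1 l2 : ℝ) (h1 : α + δ ≠ 0) (h2 : α*γ = 0) :
    (-α*l2 - (α^2 + β*γ/2) + l = 0 ∧ α*l1 - β*l2 = 0 ∧
     (β - γ/2)*l2 - (γ*α + δ*γ/2) = 0 ∧ β*l1 - (α^2 + β*γ/2) + l = 0 ∧
     (γ/2 - β)*l1 + α^2 + β*γ/2 = 0 ∧ l = 0) ↔
    ((l = 0 ∧ α = 0 ∧ β = 0 ∧ γ = 0 ∧ δ ≠ 0) ∨
     (l = 0 ∧ α = 0 ∧ β = 0 ∧ γ ≠ 0 ∧ l1 = 0 ∧ l2 = -δ ∧ δ ≠ 0) ∨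
     (l = 0 ∧ α = 0 ∧ γ = 0 ∧ l1 = 0 ∧ l2 = 0 ∧ β ≠ 0)) := by
  constructor
  · rintro ⟨e1, e2, e3, e4, e5, e6⟩
    subst e6
    -- first show α = 0
    have hα : α = 0 := by
      rcases mul_eq_zero.mp h2 with h | hγ
      · exact h
      · by_contra hα
        subst hγ
        have hl2 : l2 = -α := by
          have : α * (l2 + α) = 0 := by linear_combination -e1
          rcases mul_eq_zero.mp this with h | h; · exact absurd h hα
          linarith
        subst hl2
        have hβ : β = 0 := by
          have : β * α = 0 := by linear_combination -e3
          rcases mul_eq_zero.mp this with h | h; · exact h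
          exact absurd h hα
        subst hβ
        have : α ^ 2 = 0 := by linear_combination -e4
        exact hα (pow_eq_zero_iff (by norm_num) |>.mp this)
    subst hα
    have hδ : δ ≠ 0 := by simpa using h1
    have hβγ : β * γ = 0 := by nlinarith [e1]
    rcases mul_eq_zero.mp hβγ with hβ | hγ
    · subst hβ
      by_cases hγ : γ = 0
      · exact Or.inl ⟨rfl, rfl, rfl, hγ, hδ⟩
      · refine Or.inr (Or.inl ⟨rfl, rfl, rfl, hγ, ?_, ?_, hδ⟩)
        · have : γ * l1 = 0 := by nlinarith [e4, e5]
          rcases mul_eq_zero.mp this with h | h; · exact absurd h hγ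
          exact h
        · have : γ * (l2 + δ) = 0 := by nlinarith [e3]
          rcases mul_eq_zero.mp this with h | h; · exact absurd h hγ
          linarith
    · subst hγ
      by_cases hβ : β = 0
      · exact Or.inl ⟨rfl, rfl, hβ, rfl, hδ⟩
      · refine Or.inr (Or.inr ⟨rfl, rfl, rfl, ?_, ?_, hβ⟩)
        · have : β * l1 = 0 := by nlinarith [e5]
          rcases mul_eq_zero.mp this with h | h; · exact absurd h hβ
          exact h
        · have : β * l2 = 0 := by nlinarith [e2]
          rcases mul_eq_zero.mp this with h | h; · exact absurd h hβ
          exact h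
  · rintro (⟨h, ha, hb, hc, _⟩ | ⟨h, ha, hb, hc, hd, he, _⟩ | ⟨h, ha, hb, hc, hd, _⟩) <;>
      subst_vars <;> norm_num <;> ring
end

section
/- There do not exist real numbers α, β, λ̄, λ, λ₁, λ₂, λ₃ with α ≠ 0 and λ̄ ≠ 0 satisfying: λ₂α - α² - β² + λ = 0, -λ₁α + 2αβ = 0, λ₁α - βλ₂ - αβ = 0, -α² - β² + λ = 0, βλ₁ - αλ₂ - αλ₃ + α² + λ̄α = 0, and λ̄λ₃ + λ = 0. -/
theorem stmt13 : ¬ ∃ α β lb l l1 l2 l3 : ℝ, α ≠ 0 ∧ lb ≠ 0 ∧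
    l2*α - α^2 - β^2 + l = 0 ∧ -l1*α + 2*α*β = 0 ∧ l1*α - β*l2 - α*β = 0 ∧
    -α^2 - β^2 + l = 0 ∧ β*l1 - α*l2 - α*l3 + α^2 + lb*α = 0 ∧ lb*l3 + l = 0 := by
  rintro ⟨α, β, lb, l, l1, l2, l3, hα, hlb, h1, h2, h3, h4, h5, h6⟩
  have hl2 : l2 = 0 := by
    have : l2 * α = 0 := by linarith
    rcases mul_eq_zero.mp this with h | h
    · exact h
    · exact absurd h hα
  have hl1 : l1 = 2 * β := by
    have : α * (l1 - 2 * β) = 0 := by ring_nf; linarith [h2]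
    rcases mul_eq_zero.mp this with h | h
    · exact absurd h hα
    · linarith
  have hβ : β = 0 := by
    have : α * β = 0 := by nlinarith [h3]
    rcases mul_eq_zero.mp this with h | h
    · exact absurd h hα
    · exact h
  have hl3 : l3 = α + lb := by
    have : α * (l3 - α - lb) = 0 := by nlinarith [h5]
    rcases mul_eq_zero.mp this with h | h
    · exact absurd h hα
    · linarith
  have hl : l = α ^ 2 := by nlinarith [h4]
  have key : (2 * lb + α) ^ 2 + 3 * α ^ 2 = 0 := by
    subst hl3 hl; ring_nf; ring_nf at h6; linarith
  have hα2 : 0 < α ^ 2 := by positivity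
  nlinarith [sq_nonneg (2 * lb + α), key]
end

section
/- Let α, β, λ̄, λ, λ₁, λ₂, λ₃ be real with α ≠ 0, λ̄ ≠ 0. Then the system 2λ₂α - 2α² - β² + 2λ = 0, λ₁α = 0, -βλ₂ + αβ = 0, -2α² - β² + 2λ = 0, (β/2)λ₁ + α² + λ̄α = 0, λ̄λ₃ + λ = 0 holds if and only if λ₁ = λ₂ = 0, λ₃ = -λ̄, α = -λ̄, β = 0, λ = λ̄². -/
theorem stmt14 (α β lb l l1 l2 l3 : ℝ) (hα : α ≠ 0) (hlb : lb ≠ 0) :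
    (2*l2*α - 2*α^2 - β^2 + 2*l = 0 ∧ l1*α = 0 ∧ -β*l2 + α*β = 0 ∧
     -2*α^2 - β^2 + 2*l = 0 ∧ (β/2)*l1 + α^2 + lb*α = 0 ∧ lb*l3 + l = 0) ↔
    (l1 = 0 ∧ l2 = 0 ∧ l3 = -lb ∧ α = -lb ∧ β = 0 ∧ l = lb^2) := by
  constructor
  · rintro ⟨h1, h2, h3, h4, h5, h6⟩
    have hl1 : l1 = 0 := by rcases mul_eq_zero.mp h2 with h | h; exact h; exact absurd h hα
    have hl2 : l2 = 0 := by
      have : 2*l2*α = 0 := by linarith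
      rcases mul_eq_zero.mp this with h | h
      · rcases mul_eq_zero.mp h with h | h; norm_num at h; exact h
      · exact absurd h hα
    have hαlb : α = -lb := by
      have : α * (α + lb) = 0 := by subst hl1; ring_nf; ring_nf at h5; linarith
      rcases mul_eq_zero.mp this with h | h
      · exact absurd h hα
      · linarith
    have hβ : β = 0 := by
      have : α * β = 0 := by subst hl2; linarith
      rcases mul_eq_zero.mp this with h | h; exact absurd h hα; exact h
    have hl : l = lb^2 := by subst hβ hαlb; nlinarith
    refine ⟨hl1, hl2, ?_, hαlb, hβ, hl⟩
    have : lb * (l3 + lb) = 0 := by subst hl; ring_nf; ring_nf at h6; linarith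
    rcases mul_eq_zero.mp this with h | h; exact absurd h hlb; linarith
  · rintro ⟨h1, h2, h3, h4, h5, h6⟩
    subst h1 h2 h3 h4 h5 h6
    refine ⟨by ring, by ring, by ring, by ring, by ring, by ring⟩
end

section
/- There do not exist real numbers α, β, γ, λ̄, λ, λ₁, λ₂, λ₃ with γ ≠ 0 and λ̄ ≠ 0 satisfying: -(γ² + αβ/2) + λ = 0, λ₂γ = 0, αλ₂ + 2γλ̄ = 0, -γλ₁ - (γ² + αβ/2) + λ = 0, (α/2)λ₁ + 2(βγ/2 - αγ/4) = 0, λ̄λ₃ + λ = 0. -/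
theorem stmt15 : ¬ ∃ α β γ lb l l1 l2 l3 : ℝ, γ ≠ 0 ∧ lb ≠ 0 ∧
    -(γ^2 + α*β/2) + l = 0 ∧ l2*γ = 0 ∧ α*l2 + 2*γ*lb = 0 ∧
    -γ*l1 - (γ^2 + α*β/2) + l = 0 ∧ (α/2)*l1 + 2*(β*γ/2 - α*γ/4) = 0 ∧
    lb*l3 + l = 0 := by
  rintro ⟨α, β, γ, lb, l, l1, l2, l3, hγ, hlb, -, h2, h3, -, -, -⟩
  have hl2 : l2 = 0 := by
    rcases mul_eq_zero.1 h2 with h | h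
    · exact h
    · exact absurd h hγ
  rw [hl2, mul_zero, zero_add] at h3
  rcases mul_eq_zero.1 h3 with h | h
  · norm_num at h; exact hγ h
  · exact hlb h
end

section
/- Let α, β, γ, δ, λ̄, λ, λ₁, λ₂, λ₃ be real with α + δ ≠ 0, αγ - βδ = 0, λ̄ ≠ 0. Then the system -(α² + βγ) + λ = 0, λ₂α = 0, -δλ₃ + δλ̄ = 0, -αλ₁ - α² + λ = 0, γλ₁ = 0, λ̄λ₃ + λ = 0 holds if and only if α ≠ 0, λ₁ = λ₂ = γ = δ = 0, λ = α², λ₃ = -α²/λ̄. -/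
theorem stmt18 (α β γ δ lb l l1 l2 l3 : ℝ) (h1 : α + δ ≠ 0) (h2 : α*γ - β*δ = 0)
    (hlb : lb ≠ 0) :
    (-(α^2 + β*γ) + l = 0 ∧ l2*α = 0 ∧ -δ*l3 + δ*lb = 0 ∧ -α*l1 - α^2 + l = 0 ∧
     γ*l1 = 0 ∧ lb*l3 + l = 0) ↔
    (α ≠ 0 ∧ l1 = 0 ∧ l2 = 0 ∧ γ = 0 ∧ δ = 0 ∧ l = α^2 ∧ l3 = -α^2/lb) := by
  constructor
  · rintro ⟨e1, e2, e3, e4, e5, e6⟩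
    have hα : α ≠ 0 := by
      intro hα0
      subst hα0
      have hl : l = 0 := by nlinarith [e4]
      have hl3 : l3 = 0 := by
        have h6 : lb * l3 = 0 := by linarith
        rcases mul_eq_zero.mp h6 with h|h
        · exact absurd h hlb
        · exact h
      have hδ : δ = 0 := by
        have h3 : δ * lb = 0 := by rw [hl3] at e3; linarith
        rcases mul_eq_zero.mp h3 with h|h
        · exact h
        · exact absurd h hlb
      simp [hδ] at h1
    have hl2 : l2 = 0 := by
      rcases mul_eq_zero.mp e2 with h|h
      · exact h
      · exact absurd h hα
    have hγ : γ = 0 := by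
      by_contra hγ
      have hl1 : l1 = 0 := by
        rcases mul_eq_zero.mp e5 with h|h
        · exact absurd h hγ
        · exact h
      have hβ : β = 0 := by
        have hβγ : β*γ = 0 := by rw [hl1] at e4; nlinarith [e1, e4]
        rcases mul_eq_zero.mp hβγ with h|h
        · exact h
        · exact absurd h hγ
      have hαγ : α*γ = 0 := by rw [hβ] at h2; linarith
      rcases mul_eq_zero.mp hαγ with h|h
      · exact hα h
      · exact hγ h
    have hl1 : l1 = 0 := by
      have h' : α * l1 = 0 := by rw [hγ] at e1; nlinarith [e1, e4]
      rcases mul_eq_zero.mp h' with h|h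
      · exact absurd h hα
      · exact h
    have hl : l = α^2 := by rw [hl1] at e4; nlinarith [e4]
    have hl3 : l3 = -α^2/lb := by
      field_simp
      nlinarith [e6, hl]
    have hδ : δ = 0 := by
      by_contra hδ
      have h3' : lb - l3 = 0 := by
        have hd : δ * (lb - l3) = 0 := by ring_nf; linarith [e3]
        rcases mul_eq_zero.mp hd with h|h
        · exact absurd h hδ
        · exact h
      rw [hl3] at h3'
      have hlbα : lb^2 + α^2 = 0 := by
        field_simp at h3'
        nlinarith [h3']
      nlinarith [sq_nonneg lb, sq_nonneg α, pow_pos (abs_pos.mpr hα) 2,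
        sq_abs α, sq_abs lb, pow_pos (abs_pos.mpr hlb) 2]
    exact ⟨hα, hl1, hl2, hγ, hδ, hl, hl3⟩
  · rintro ⟨hα, hl1, hl2, hγ, hδ, hl, hl3⟩
    subst hl1 hl2 hγ hδ hl hl3
    refine ⟨by ring, by ring, by ring, by ring, by ring, ?_⟩
    field_simp
    ring
end

section
/- Let α, β, γ, δ, λ̄, λ, λ₁, λ₂, λ₃ be real with α + δ ≠ 0, αγ = 0, λ̄ ≠ 0. Then the system -αλ₂ - α² + λ = 0, αλ₁ - βλ₂ + βδ - αβ = 0, -αλ₁ - γλ₂ - βλ₃ + 2β(α + δ + λ̄/2) = 0, βλ₁ - (α² + β² + βγ) + λ = 0, -βλ₁ - δλ₂ - δλ₃ + βγ + αδ + 2δ² + δλ̄ = 0, λ̄λ₃ + λ = 0 holds if and only if one of: (i) λ = α = β = γ = λ₃ = 0, δ ≠ 0, λ₂ = 2δ + λ̄; (ii) α = β = λ = λ₂ = λ₃ = 0, γ ≠ 0, δ ≠ 0, λ̄ = -2δ; (iii) α = λ = λ₃ = 0, β ≠ 0, δ ≠ 0, λ₁ = β + γ, λ₂ = δ, λ̄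 = (γδ - 2βδ)/β, γ = (β³ + βδ²)/δ²; (iv) α ≠ 0, β = γ = δ = λ₁ = λ₂ = 0, λ = α², λ₃ = -α²/λ̄; (v) α ≠ 0, β = γ = λ₁ = λ₂ = 0, λ = α², δ ≠ 0, λ₃ = α + 2δ + λ̄, λ̄² + (α + 2δ)λ̄ + α² = 0. -/
theorem stmt19 (α β γ δ lb l l1 l2 l3 : ℝ) (h1 : α + δ ≠ 0) (h2 : α*γ = 0)
    (hlb : lb ≠ 0) :
    (-α*l2 - α^2 + l = 0 ∧ α*l1 - β*l2 + β*δ - α*β = 0 ∧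
     -α*l1 - γ*l2 - β*l3 + 2*β*(α + δ + lb/2) = 0 ∧
     β*l1 - (α^2 + β^2 + β*γ) + l = 0 ∧
     -β*l1 - δ*l2 - δ*l3 + β*γ + α*δ + 2*δ^2 + δ*lb = 0 ∧ lb*l3 + l = 0) ↔
    ((l = 0 ∧ α = 0 ∧ β = 0 ∧ γ = 0 ∧ l3 = 0 ∧ δ ≠ 0 ∧ l2 = 2*δ + lb) ∨
     (α = 0 ∧ β = 0 ∧ l = 0 ∧ l2 = 0 ∧ l3 = 0 ∧ γ ≠ 0 ∧ δ ≠ 0 ∧ lb = -2*δ) ∨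
     (α = 0 ∧ l = 0 ∧ l3 = 0 ∧ β ≠ 0 ∧ δ ≠ 0 ∧ l1 = β + γ ∧ l2 = δ ∧
      lb = (γ*δ - 2*β*δ)/β ∧ γ = (β^3 + β*δ^2)/δ^2) ∨
     (α ≠ 0 ∧ β = 0 ∧ γ = 0 ∧ δ = 0 ∧ l1 = 0 ∧ l2 = 0 ∧ l = α^2 ∧ l3 = -α^2/lb) ∨
     (α ≠ 0 ∧ β = 0 ∧ γ = 0 ∧ l1 = 0 ∧ l2 = 0 ∧ l = α^2 ∧ δ ≠ 0 ∧
      l3 = α + 2*δ + lb ∧ lb^2 + (α + 2*δ)*lb + α^2 = 0)) := by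
  constructor
  · rintro ⟨e1, e2, e3, e4, e5, e6⟩
    by_cases hα : α = 0
    · subst hα
      have hδ : δ ≠ 0 := by simpa using h1
      have hl : l = 0 := by linarith
      have hl3 : l3 = 0 := by
        rcases mul_eq_zero.1 (by linarith : lb * l3 = 0) with h | h
        · exact absurd h hlb
        · exact h
      by_cases hβ : β = 0
      · subst hβ
        by_cases hγ : γ = 0
        · left
          refine ⟨hl, rfl, rfl, hγ, hl3, hδ, ?_⟩
          have h5 : δ * (l2 - 2*δ - lb) = 0 := by linear_combination -e5 - δ*hl3
          rcases mul_eq_zero.1 h5 with h | h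
          · exact absurd h hδ
          · linarith
        · right; left
          have hl2 : l2 = 0 := by
            rcases mul_eq_zero.1 (by linarith : γ * l2 = 0) with h | h
            · exact absurd h hγ
            · exact h
          refine ⟨rfl, rfl, hl, hl2, hl3, hγ, hδ, ?_⟩
          have h5 : δ * (2*δ + lb) = 0 := by linear_combination e5 + δ*hl2 + δ*hl3
          rcases mul_eq_zero.1 h5 with h | h
          · exact absurd h hδ
          · linarith
      · right; right; left
        have hl2 : l2 = δ := by
          have h5 : β * (δ - l2) = 0 := by linear_combination e2
          rcases mul_eq_zero.1 h5 with h | h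
          · exact absurd h hβ
          · linarith
        have hl1 : l1 = β + γ := by
          have h5 : β * (l1 - β - γ) = 0 := by linear_combination e4 - hl
          rcases mul_eq_zero.1 h5 with h | h
          · exact absurd h hβ
          · linarith
        have hlbv : β * lb = γ*δ - 2*β*δ := by
          linear_combination e3 + γ*hl2 + β*hl3
        have hδlb : δ * lb = β^2 - δ^2 := by
          linear_combination e5 + β*hl1 + δ*hl2 + δ*hl3
        have hγv : γ * δ^2 = β^3 + β*δ^2 := by
          linear_combination β*hδlb - δ*hlbv
        refine ⟨rfl, hl, hl3, hβ, hδ, hl1, hl2, ?_, ?_⟩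
        · rw [eq_div_iff hβ]; linear_combination hlbv
        · rw [eq_div_iff (pow_ne_zero 2 hδ)]; linear_combination hγv
    · have hγ : γ = 0 := by
        rcases mul_eq_zero.1 h2 with h | h
        · exact absurd h hα
        · exact h
      subst hγ
      by_cases hβ : β = 0
      · subst hβ
        have hl : l = α^2 := by linarith
        have hl2 : l2 = 0 := by
          have h5 : α * l2 = 0 := by linarith
          rcases mul_eq_zero.1 h5 with h | h
          · exact absurd h hα
          · exact h
        have hl1 : l1 = 0 := by
          have h5 : α * l1 = 0 := by linarith
          rcases mul_eq_zero.1 h5 with h | h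
          · exact absurd h hα
          · exact h
        by_cases hδ : δ = 0
        · right; right; right; left
          refine ⟨hα, rfl, rfl, hδ, hl1, hl2, hl, ?_⟩
          rw [eq_div_iff hlb]
          linear_combination e6 - hl
        · right; right; right; right
          have hl3 : l3 = α + 2*δ + lb := by
            have h5 : δ * (α + 2*δ + lb - l3) = 0 := by
              linear_combination e5 + δ*hl2
            rcases mul_eq_zero.1 h5 with h | h
            · exact absurd h hδ
            · linarith
          refine ⟨hα, rfl, rfl, hl1, hl2, hl, hδ, hl3, ?_⟩
          linear_combination e6 - lb*hl3 - hl
      · exfalso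
        have key1 : l2 * (α^2 + β^2) = β^2 * δ := by
          linear_combination -β*e2 + α*e4 - α*e1
        have hl1 : β * l1 = β^2 - α * l2 := by linear_combination e4 - e1
        have hl3v : β * l3 = β * (α + 3*δ + lb - l2) := by
          linear_combination -e2 - e3
        have hl3 : l3 = α + 3*δ + lb - l2 := mul_left_cancel₀ hβ hl3v
        have key2 : α * l2 = β^2 + δ^2 := by
          linear_combination e5 + hl1 + δ*hl3
        have combo : α * (β^2 * δ) = (β^2 + δ^2) * (α^2 + β^2) := by
          linear_combination (α^2+β^2)*key2 - α*key1
        have hβ2 : 0 < β^2 := by positivity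
        nlinarith [combo, sq_nonneg (β*(2*α - δ)), sq_nonneg (β*δ),
          sq_nonneg (α*δ), mul_pos hβ2 hβ2]
  · rintro (⟨hl, hα, hβ, hγ, hl3, hδ, hl2⟩ | ⟨hα, hβ, hl, hl2, hl3, hγ, hδ, hlbv⟩ |
      ⟨hα, hl, hl3, hβ, hδ, hl1, hl2, hlbv, hγ⟩ |
      ⟨hα, hβ, hγ, hδ, hl1, hl2, hl, hl3⟩ |
      ⟨hα, hβ, hγ, hl1, hl2, hl, hδ, hl3, hq⟩)
    · subst hl; subst hα; subst hβ; subst hγ; subst hl3; subst hl2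
      refine ⟨by ring, by ring, by ring, by ring, by ring, by ring⟩
    · subst hα; subst hβ; subst hl; subst hl2; subst hl3; subst hlbv
      refine ⟨by ring, by ring, by ring, by ring, by ring, by ring⟩
    · subst hα; subst hl; subst hl3; subst hl1
      have hlb' : β * lb = γ*δ - 2*β*δ := by
        rw [hlbv]; field_simp
      have hγ' : γ * δ^2 = β^3 + β*δ^2 := by
        rw [hγ]; field_simp
      have h5 : δ * lb = β^2 - δ^2 :=
        mul_left_cancel₀ hβ (by linear_combination δ*hlb' + hγ')
      refine ⟨by ring, by rw [hl2]; ring, by rw [hl2]; linear_combination hlb',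
        by ring, by rw [hl2]; linear_combination h5, by ring⟩
    · subst hβ; subst hγ; subst hδ; subst hl1; subst hl2; subst hl; subst hl3
      refine ⟨by ring, by ring, by ring, by ring, by ring, by field_simp; ring⟩
    · subst hβ; subst hγ; subst hl1; subst hl2; subst hl; subst hl3
      refine ⟨by ring, by ring, by ring, by ring, by ring, by linear_combination hq⟩
end
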